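/- arXiv:1806.09975 — 7 statements merged into one kernel-verified Lean document; each statement's English description precedes it below -/
import Mathlib

section
/- Let α ∈ (0,1). If f, g : ℝ → ℝ are bounded functions for which D_α[f](x) and D_α[g](x) are defined (the defining integrals converge absolutely for every x ∈ ℝ), then for every x ∈ ℝ the product f·g satisfies D_α[f·g](x) = f(x)·D_α[g](x) + g(x)·D_α[f](x) − Λ_α[f,g](x) (extended product rule for the positive fractional derivative). -/
/-!
Write `Δh(y) = h(x) - h(x - y)`. Pointwise,
`Δ(fg) = f(x) Δg + g(x) Δf - Δf Δg`, so the product rule is linearity of the integral once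
`Δf Δg / y^(1+α)` is known to be integrable; this holds because `Δf / y^(1+α)` is integrable
and `|Δg| ≤ 2 sup |g|`.
-/

open MeasureTheory Set

/-- The positive fractional derivative in generator form:
`D_α[f](x) = (α/Γ(1−α)) ∫₀^∞ (f(x) − f(x−y)) y^{−1−α} dy`. -/
noncomputable def Dpos (α : ℝ) (f : ℝ → ℝ) (x : ℝ) : ℝ :=
  α / Real.Gamma (1 - α) * ∫ y in Ioi (0 : ℝ), (f x - f (x - y)) / y ^ (1 + α)

/-- The bilinear operator
`Λ_α[f,g](x) = (α/Γ(1−α)) ∫₀^∞ (f(x) − f(x−y))(g(x) − g(x−y)) y^{−1−α} dy`. -/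
noncomputable def LambdaPos (α : ℝ) (f g : ℝ → ℝ) (x : ℝ) : ℝ :=
  α / Real.Gamma (1 - α) *
    ∫ y in Ioi (0 : ℝ), (f x - f (x - y)) * (g x - g (x - y)) / y ^ (1 + α)

variable {X : Type*} [MeasurableSpace X] {μ : Measure X}

theorem aestronglyMeasurable_of_integrable_div {u w : X → ℝ}
    (hw : AEStronglyMeasurable w μ) (hw0 : ∀ᵐ y ∂μ, w y ≠ 0)
    (h : Integrable (fun y => u y / w y) μ) : AEStronglyMeasurable u μ := by
  refine (h.aestronglyMeasurable.mul hw).congr ?_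
  filter_upwards [hw0] with y hy
  exact div_mul_cancel₀ (u y) hy

theorem integrable_mul_div_of_abs_le {u v w : X → ℝ} {C : ℝ}
    (hu : Integrable (fun y => u y / w y) μ) (hv : AEStronglyMeasurable v μ)
    (hvC : ∀ y, |v y| ≤ C) : Integrable (fun y => u y * v y / w y) μ := by
  have huv : Integrable (fun y => u y / w y * v y) μ :=
    hu.mul_bdd hv (Filter.Eventually.of_forall hvC)
  refine huv.congr (Filter.Eventually.of_forall fun y => ?_)
  exact div_mul_eq_mul_div (u y) (w y) (v y)

theorem integral_mul_sub_mul_div {a b : ℝ} {φ ψ w : X → ℝ}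
    (hφ : Integrable (fun y => (a - φ y) / w y) μ)
    (hψ : Integrable (fun y => (b - ψ y) / w y) μ)
    (hφψ : Integrable (fun y => (a - φ y) * (b - ψ y) / w y) μ) :
    ∫ y, (a * b - φ y * ψ y) / w y ∂μ
      = a * ∫ y, (b - ψ y) / w y ∂μ + b * ∫ y, (a - φ y) / w y ∂μ
        - ∫ y, (a - φ y) * (b - ψ y) / w y ∂μ := by
  have hsplit : (fun y => (a * b - φ y * ψ y) / w y)
      = fun y => (a * ((b - ψ y) / w y) + b * ((a - φ y) / w y))
          - (a - φ y) * (b - ψ y) / w y := by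
    funext y
    ring
  have hlin : Integrable (fun y => a * ((b - ψ y) / w y) + b * ((a - φ y) / w y)) μ :=
    (hψ.const_mul a).add (hφ.const_mul b)
  rw [hsplit, integral_sub hlin hφψ,
    integral_add (hψ.const_mul a) (hφ.const_mul b), integral_const_mul, integral_const_mul]

theorem abs_sub_le_two_mul_of_abs_le {g : ℝ → ℝ} {C : ℝ} (hg : ∀ t, |g t| ≤ C) (s t : ℝ) :
    |g s - g t| ≤ 2 * C := by
  linarith [abs_sub (g s) (g t), hg s, hg t]

theorem extended_product_rule_pos_general (α : ℝ)
    (f g : ℝ → ℝ) (Cg : ℝ)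
    (hgb : ∀ x, |g x| ≤ Cg)
    (hfI : ∀ x : ℝ,
      IntegrableOn (fun y => (f x - f (x - y)) / y ^ (1 + α)) (Ioi (0 : ℝ)))
    (hgI : ∀ x : ℝ,
      IntegrableOn (fun y => (g x - g (x - y)) / y ^ (1 + α)) (Ioi (0 : ℝ))) :
    ∀ x : ℝ, Dpos α (fun t => f t * g t) x
      = f x * Dpos α g x + g x * Dpos α f x - LambdaPos α f g x := by
  intro x
  have hweight : AEStronglyMeasurable (fun y : ℝ => y ^ (1 + α)) (volume.restrict (Ioi 0)) :=
    (measurable_id.pow_const _).aestronglyMeasurable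
  have hweight0 : ∀ᵐ y ∂(volume.restrict (Ioi (0 : ℝ))), y ^ (1 + α) ≠ 0 := by
    filter_upwards [ae_restrict_mem measurableSet_Ioi] with y hy
    exact (Real.rpow_pos_of_pos hy _).ne'
  have hΛ : IntegrableOn
      (fun y => (f x - f (x - y)) * (g x - g (x - y)) / y ^ (1 + α)) (Ioi 0) :=
    integrable_mul_div_of_abs_le (hfI x)
      (aestronglyMeasurable_of_integrable_div hweight hweight0 (hgI x))
      (fun y => abs_sub_le_two_mul_of_abs_le hgb x (x - y))
  simp only [Dpos, LambdaPos]
  rw [integral_mul_sub_mul_div (hfI x) (hgI x) hΛ]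
  ring

/-- Extended product rule for the positive fractional derivative. -/
theorem extended_product_rule_pos (α : ℝ) (hα : α ∈ Ioo (0 : ℝ) 1)
    (f g : ℝ → ℝ) (Cf Cg : ℝ)
    (hfb : ∀ x, |f x| ≤ Cf) (hgb : ∀ x, |g x| ≤ Cg)
    (hfI : ∀ x : ℝ,
      IntegrableOn (fun y => (f x - f (x - y)) / y ^ (1 + α)) (Ioi (0 : ℝ)))
    (hgI : ∀ x : ℝ,
      IntegrableOn (fun y => (g x - g (x - y)) / y ^ (1 + α)) (Ioi (0 : ℝ))) :
    ∀ x : ℝ, Dpos α (fun t => f t * g t) x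
      = f x * Dpos α g x + g x * Dpos α f x - LambdaPos α f g x :=
  extended_product_rule_pos_general α f g Cg hgb hfI hgI
end

section
/- Let α ∈ (0,1). If f, g : ℝ → ℝ are bounded functions for which D_α^-[f](x) and D_α^-[g](x) are defined (the defining integrals converge absolutely for every x ∈ ℝ), then for every x ∈ ℝ the product f·g satisfies D_α^-[f·g](x) = f(x)·D_α^-[g](x) + g(x)·D_α^-[f](x) − Λ_α^-[f,g](x) (extended product rule for the negative fractional derivative). -/
/-!
Expanding `f x g x − f(x+y) g(x+y)` as
`f x (g x − g(x+y)) + g x (f x − f(x+y)) − (f x − f(x+y))(g x − g(x+y))` splits the integrand of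
`D_α^-[f·g](x)` into those of `D_α^-[g]`, `D_α^-[f]` and `Λ_α^-[f,g]`, so the rule follows from
linearity of the integral once the `Λ` integrand is integrable. It is: `f x − f(x+·)` is bounded,
and it is a.e. measurable on `(0, ∞)` because it is the integrable `D_α^-[f]` integrand times `y^{1+α}`.
-/

open MeasureTheory Set

/-- The negative fractional derivative in generator form:
`D_α^-[f](x) = (α/Γ(1−α)) ∫₀^∞ (f(x) − f(x+y)) y^{−1−α} dy`. -/
noncomputable def Dneg (α : ℝ) (f : ℝ → ℝ) (x : ℝ) : ℝ :=
  α / Real.Gamma (1 - α) * ∫ y in Ioi (0 : ℝ), (f x - f (x + y)) / y ^ (1 + α)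

/-- The bilinear operator
`Λ_α^-[f,g](x) = (α/Γ(1−α)) ∫₀^∞ (f(x) − f(x+y))(g(x) − g(x+y)) y^{−1−α} dy`. -/
noncomputable def LambdaNeg (α : ℝ) (f g : ℝ → ℝ) (x : ℝ) : ℝ :=
  α / Real.Gamma (1 - α) *
    ∫ y in Ioi (0 : ℝ), (f x - f (x + y)) * (g x - g (x + y)) / y ^ (1 + α)

theorem aestronglyMeasurable_of_integrableOn_div_rpow {u : ℝ → ℝ} {s : ℝ}
    (hu : IntegrableOn (fun y => u y / y ^ s) (Ioi 0)) :
    AEStronglyMeasurable u (volume.restrict (Ioi 0)) := by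
  have hmul : AEStronglyMeasurable (fun y => u y / y ^ s * y ^ s) (volume.restrict (Ioi 0)) :=
    hu.aestronglyMeasurable.mul
      (show Measurable fun y : ℝ => y ^ s by fun_prop).aestronglyMeasurable
  refine hmul.congr ?_
  filter_upwards [ae_restrict_mem measurableSet_Ioi] with y hy
  exact div_mul_cancel₀ _ (Real.rpow_pos_of_pos hy s).ne'

theorem IntegrableOn.mul_div_rpow_of_abs_le {u v : ℝ → ℝ} {s C : ℝ}
    (hu : IntegrableOn (fun y => u y / y ^ s) (Ioi 0)) (hub : ∀ y, |u y| ≤ C)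
    (hv : IntegrableOn (fun y => v y / y ^ s) (Ioi 0)) :
    IntegrableOn (fun y => u y * v y / y ^ s) (Ioi 0) := by
  simp_rw [mul_div_assoc]
  exact hv.bdd_mul (aestronglyMeasurable_of_integrableOn_div_rpow hu) (.of_forall hub)

theorem abs_sub_le_two_mul {f : ℝ → ℝ} {C : ℝ} (hf : ∀ x, |f x| ≤ C) (x x' : ℝ) :
    |f x - f x'| ≤ 2 * C := by
  linarith [abs_sub (f x) (f x'), hf x, hf x']

theorem extended_product_rule_neg_general (α : ℝ)
    (f g : ℝ → ℝ) (Cf : ℝ)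
    (hfb : ∀ x, |f x| ≤ Cf)
    (hfI : ∀ x : ℝ,
      IntegrableOn (fun y => (f x - f (x + y)) / y ^ (1 + α)) (Ioi (0 : ℝ)))
    (hgI : ∀ x : ℝ,
      IntegrableOn (fun y => (g x - g (x + y)) / y ^ (1 + α)) (Ioi (0 : ℝ))) :
    ∀ x : ℝ, Dneg α (fun t => f t * g t) x
      = f x * Dneg α g x + g x * Dneg α f x - LambdaNeg α f g x := by
  intro x
  have hΛ := IntegrableOn.mul_div_rpow_of_abs_le (hfI x)
    (fun y => abs_sub_le_two_mul hfb x (x + y)) (hgI x)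
  have hsplit : (fun y : ℝ => (f x * g x - f (x + y) * g (x + y)) / y ^ (1 + α)) =
      fun y => f x * ((g x - g (x + y)) / y ^ (1 + α)) + g x * ((f x - f (x + y)) / y ^ (1 + α))
        - (f x - f (x + y)) * (g x - g (x + y)) / y ^ (1 + α) := by
    funext y
    ring
  have hDg := (hgI x).const_mul (f x)
  have hDf := (hfI x).const_mul (g x)
  simp only [Dneg, LambdaNeg, hsplit]
  rw [integral_sub (f := fun y => _ + _) (hDg.add hDf) hΛ, integral_add hDg hDf,
    integral_const_mul, integral_const_mul]
  ring

/-- Extended product rule for the negative fractional derivative. -/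
theorem extended_product_rule_neg (α : ℝ) (hα : α ∈ Ioo (0 : ℝ) 1)
    (f g : ℝ → ℝ) (Cf Cg : ℝ)
    (hfb : ∀ x, |f x| ≤ Cf) (hgb : ∀ x, |g x| ≤ Cg)
    (hfI : ∀ x : ℝ,
      IntegrableOn (fun y => (f x - f (x + y)) / y ^ (1 + α)) (Ioi (0 : ℝ)))
    (hgI : ∀ x : ℝ,
      IntegrableOn (fun y => (g x - g (x + y)) / y ^ (1 + α)) (Ioi (0 : ℝ))) :
    ∀ x : ℝ, Dneg α (fun t => f t * g t) x
      = f x * Dneg α g x + g x * Dneg α f x - LambdaNeg α f g x :=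
  extended_product_rule_neg_general α f g Cf hfb hfI hgI
end

section
/- Let α ∈ (0,1). If f, g : ℝ → ℝ are bounded functions for which D_α[f], D_α[g], D_α^-[f], D_α^-[g] are all defined at every x ∈ ℝ (so that 𝓛[f] and 𝓛[g] are defined), then for every x ∈ ℝ the product f·g satisfies 𝓛[f·g](x) = f(x)·𝓛[g](x) + g(x)·𝓛[f](x) + Λ_α[f,g](x) + Λ_α^-[f,g](x), where moreover 𝓛 = −D_α − D_α^- pointwise on such functions. -/
/-!
On each half-line the kernel `|y|^(-1-α)` is `y^(-1-α)` and the increment `f (x + y) - f x`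
is minus the integrand of `D_α` (for `y < 0`) or `D_α^-` (for `y > 0`), which gives
`𝓛 = -D_α - D_α^-`. For the product, `(fg)(x+y) - (fg)(x) = f(x) Δg + g(x) Δf + Δf Δg`; the
cross term is integrable against the kernel because `Δf` is bounded and `Δg` is integrable
against it, and its two half-line integrals are `Λ_α[f,g]` and `Λ_α^-[f,g]`.
-/

open MeasureTheory Set

/-- The generator of the one-dimensional symmetric α-stable process:
`𝓛[f](x) = (α/Γ(1−α)) ∫_{ℝ∖{0}} (f(x+y) − f(x)) |y|^{−1−α} dy`. -/
noncomputable def genL (α : ℝ) (f : ℝ → ℝ) (x : ℝ) : ℝ :=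
  α / Real.Gamma (1 - α) *
    ∫ y in ({0}ᶜ : Set ℝ), (f (x + y) - f x) / |y| ^ (1 + α)

section HalfLines

variable {E : Type*} [NormedAddCommGroup E]

theorem integrableOn_Iio_of_comp_neg {φ : ℝ → E}
    (h : IntegrableOn (fun y => φ (-y)) (Ioi 0)) : IntegrableOn φ (Iio 0) := by
  have hemb : MeasurableEmbedding fun x : ℝ => -x := (Homeomorph.neg ℝ).measurableEmbedding
  rw [IntegrableOn, ← Measure.map_neg_eq_self (volume : Measure ℝ), ← IntegrableOn,
    hemb.integrableOn_map_iff]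
  simpa [Function.comp_def] using h

theorem integrableOn_compl_zero {φ : ℝ → E}
    (hneg : IntegrableOn (fun y => φ (-y)) (Ioi 0)) (hpos : IntegrableOn φ (Ioi 0)) :
    IntegrableOn φ {0}ᶜ := by
  rw [← Iio_union_Ioi]
  exact (integrableOn_Iio_of_comp_neg hneg).union hpos

theorem setIntegral_compl_zero [NormedSpace ℝ E] {φ : ℝ → E}
    (hneg : IntegrableOn (fun y => φ (-y)) (Ioi 0)) (hpos : IntegrableOn φ (Ioi 0)) :
    ∫ y in {0}ᶜ, φ y = (∫ y in Ioi 0, φ (-y)) + ∫ y in Ioi 0, φ y := by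
  have hdisj : Disjoint (Iio (0 : ℝ)) (Ioi 0) :=
    (Iic_disjoint_Ioi le_rfl).mono_left Iio_subset_Iic_self
  rw [← Iio_union_Ioi, setIntegral_union hdisj measurableSet_Ioi
    (integrableOn_Iio_of_comp_neg hneg) hpos, integral_comp_neg_Ioi, neg_zero,
    integral_Iic_eq_integral_Iio]

end HalfLines

theorem integrableOn_mul_div_of_abs_le {X : Type*} [MeasurableSpace X] {μ : Measure X}
    {s : Set X} {u v w : X → ℝ} {M : ℝ} (hs : MeasurableSet s) (hw : Measurable w)
    (hw0 : ∀ y ∈ s, w y ≠ 0) (hu : IntegrableOn (fun y => u y / w y) s μ)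
    (hv : IntegrableOn (fun y => v y / w y) s μ) (hM : ∀ y, |u y| ≤ M) :
    IntegrableOn (fun y => u y * v y / w y) s μ := by
  have hu_meas : AEStronglyMeasurable u (μ.restrict s) := by
    refine (hu.aestronglyMeasurable.mul hw.aestronglyMeasurable).congr ?_
    filter_upwards [ae_restrict_mem hs] with y hy
    exact div_mul_cancel₀ _ (hw0 y hy)
  simp only [mul_div_assoc]
  exact hv.bdd_mul hu_meas (ae_of_all _ hM)

section AbsRpowKernel

variable {u : ℝ → ℝ} {s : ℝ}

theorem eqOn_div_abs_rpow_Ioi :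
    EqOn (fun y => u y / |y| ^ s) (fun y => u y / y ^ s) (Ioi 0) := fun y hy => by
  simp only [abs_of_pos (mem_Ioi.mp hy)]

theorem eqOn_comp_neg_div_abs_rpow_Ioi :
    EqOn (fun y => u (-y) / |-y| ^ s) (fun y => u (-y) / y ^ s) (Ioi 0) := fun y hy => by
  simp only [abs_neg, abs_of_pos (mem_Ioi.mp hy)]

theorem integrableOn_compl_zero_div_abs_rpow
    (hneg : IntegrableOn (fun y => u (-y) / y ^ s) (Ioi 0))
    (hpos : IntegrableOn (fun y => u y / y ^ s) (Ioi 0)) :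
    IntegrableOn (fun y => u y / |y| ^ s) {0}ᶜ :=
  integrableOn_compl_zero
    (hneg.congr_fun eqOn_comp_neg_div_abs_rpow_Ioi.symm measurableSet_Ioi)
    (hpos.congr_fun eqOn_div_abs_rpow_Ioi.symm measurableSet_Ioi)

theorem setIntegral_compl_zero_div_abs_rpow
    (hneg : IntegrableOn (fun y => u (-y) / y ^ s) (Ioi 0))
    (hpos : IntegrableOn (fun y => u y / y ^ s) (Ioi 0)) :
    ∫ y in {0}ᶜ, u y / |y| ^ s
      = (∫ y in Ioi 0, u (-y) / y ^ s) + ∫ y in Ioi 0, u y / y ^ s := by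
  rw [setIntegral_compl_zero
    (hneg.congr_fun eqOn_comp_neg_div_abs_rpow_Ioi.symm measurableSet_Ioi)
    (hpos.congr_fun eqOn_div_abs_rpow_Ioi.symm measurableSet_Ioi),
    setIntegral_congr_fun measurableSet_Ioi eqOn_comp_neg_div_abs_rpow_Ioi,
    setIntegral_congr_fun measurableSet_Ioi eqOn_div_abs_rpow_Ioi]

end AbsRpowKernel

section Generator

variable {α s : ℝ} {h : ℝ → ℝ} {x : ℝ}

theorem increment_comp_neg_div_rpow (y : ℝ) :
    (h (x + -y) - h x) / y ^ s = -((h x - h (x - y)) / y ^ s) := by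
  rw [← sub_eq_add_neg, ← neg_div, neg_sub]

theorem increment_div_rpow (y : ℝ) :
    (h (x + y) - h x) / y ^ s = -((h x - h (x + y)) / y ^ s) := by
  rw [← neg_div, neg_sub]

theorem integrableOn_increment_comp_neg_div_rpow
    (hpos : IntegrableOn (fun y => (h x - h (x - y)) / y ^ s) (Ioi 0)) :
    IntegrableOn (fun y => (h (x + -y) - h x) / y ^ s) (Ioi 0) := by
  simpa only [increment_comp_neg_div_rpow, Pi.neg_def] using hpos.neg

theorem integrableOn_increment_div_rpow
    (hneg : IntegrableOn (fun y => (h x - h (x + y)) / y ^ s) (Ioi 0)) :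
    IntegrableOn (fun y => (h (x + y) - h x) / y ^ s) (Ioi 0) := by
  simpa only [increment_div_rpow, Pi.neg_def] using hneg.neg

theorem integrableOn_genL_integrand
    (hpos : IntegrableOn (fun y => (h x - h (x - y)) / y ^ (1 + α)) (Ioi 0))
    (hneg : IntegrableOn (fun y => (h x - h (x + y)) / y ^ (1 + α)) (Ioi 0)) :
    IntegrableOn (fun y => (h (x + y) - h x) / |y| ^ (1 + α)) {0}ᶜ :=
  integrableOn_compl_zero_div_abs_rpow (integrableOn_increment_comp_neg_div_rpow hpos)
    (integrableOn_increment_div_rpow hneg)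

theorem setIntegral_genL_integrand
    (hpos : IntegrableOn (fun y => (h x - h (x - y)) / y ^ (1 + α)) (Ioi 0))
    (hneg : IntegrableOn (fun y => (h x - h (x + y)) / y ^ (1 + α)) (Ioi 0)) :
    ∫ y in {0}ᶜ, (h (x + y) - h x) / |y| ^ (1 + α)
      = -(∫ y in Ioi 0, (h x - h (x - y)) / y ^ (1 + α))
        - ∫ y in Ioi 0, (h x - h (x + y)) / y ^ (1 + α) := by
  rw [setIntegral_compl_zero_div_abs_rpow (integrableOn_increment_comp_neg_div_rpow hpos)
    (integrableOn_increment_div_rpow hneg)]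
  simp only [increment_comp_neg_div_rpow, increment_div_rpow, integral_neg]
  ring

theorem genL_eq_neg_Dpos_sub_Dneg
    (hpos : IntegrableOn (fun y => (h x - h (x - y)) / y ^ (1 + α)) (Ioi 0))
    (hneg : IntegrableOn (fun y => (h x - h (x + y)) / y ^ (1 + α)) (Ioi 0)) :
    genL α h x = -Dpos α h x - Dneg α h x := by
  rw [genL, Dpos, Dneg, setIntegral_genL_integrand hpos hneg]
  ring

end Generator

section ProductRule

variable {α : ℝ} {f g : ℝ → ℝ} {x : ℝ}

theorem setIntegral_compl_zero_mul_increments {C : ℝ} (hf : ∀ t, |f t| ≤ C)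
    (hfpos : IntegrableOn (fun y => (f x - f (x - y)) / y ^ (1 + α)) (Ioi 0))
    (hgpos : IntegrableOn (fun y => (g x - g (x - y)) / y ^ (1 + α)) (Ioi 0))
    (hfneg : IntegrableOn (fun y => (f x - f (x + y)) / y ^ (1 + α)) (Ioi 0))
    (hgneg : IntegrableOn (fun y => (g x - g (x + y)) / y ^ (1 + α)) (Ioi 0)) :
    IntegrableOn (fun y => (f (x + y) - f x) * (g (x + y) - g x) / |y| ^ (1 + α)) {0}ᶜ ∧
    ∫ y in {0}ᶜ, (f (x + y) - f x) * (g (x + y) - g x) / |y| ^ (1 + α)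
      = (∫ y in Ioi 0, (f x - f (x - y)) * (g x - g (x - y)) / y ^ (1 + α))
        + ∫ y in Ioi 0, (f x - f (x + y)) * (g x - g (x + y)) / y ^ (1 + α) := by
  have hbound : ∀ a b, |f a - f b| ≤ C + C := fun a b =>
    (abs_sub _ _).trans (add_le_add (hf a) (hf b))
  have hpow : Measurable fun y : ℝ => y ^ (1 + α) := by fun_prop
  have hpow0 : ∀ y ∈ Ioi (0 : ℝ), y ^ (1 + α) ≠ 0 := fun y hy =>
    (Real.rpow_pos_of_pos hy _).ne'
  have hcomp_neg : ∀ y : ℝ, (f (x + -y) - f x) * (g (x + -y) - g x) / y ^ (1 + α)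
      = (f x - f (x - y)) * (g x - g (x - y)) / y ^ (1 + α) := fun y => by
    rw [← sub_eq_add_neg]; ring
  have hflip : ∀ y : ℝ, (f (x + y) - f x) * (g (x + y) - g x) / y ^ (1 + α)
      = (f x - f (x + y)) * (g x - g (x + y)) / y ^ (1 + α) := fun y => by ring
  have hpos : IntegrableOn
      (fun y => (f (x + -y) - f x) * (g (x + -y) - g x) / y ^ (1 + α)) (Ioi 0) := by
    simpa only [hcomp_neg] using integrableOn_mul_div_of_abs_le measurableSet_Ioi hpow hpow0
      hfpos hgpos (fun y => hbound x (x - y))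
  have hneg : IntegrableOn
      (fun y => (f (x + y) - f x) * (g (x + y) - g x) / y ^ (1 + α)) (Ioi 0) := by
    simpa only [hflip] using integrableOn_mul_div_of_abs_le measurableSet_Ioi hpow hpow0
      hfneg hgneg (fun y => hbound x (x + y))
  refine ⟨integrableOn_compl_zero_div_abs_rpow hpos hneg, ?_⟩
  rw [setIntegral_compl_zero_div_abs_rpow hpos hneg]
  simp only [hcomp_neg, hflip]

theorem genL_mul {C : ℝ} (hf : ∀ t, |f t| ≤ C)
    (hfpos : IntegrableOn (fun y => (f x - f (x - y)) / y ^ (1 + α)) (Ioi 0))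
    (hgpos : IntegrableOn (fun y => (g x - g (x - y)) / y ^ (1 + α)) (Ioi 0))
    (hfneg : IntegrableOn (fun y => (f x - f (x + y)) / y ^ (1 + α)) (Ioi 0))
    (hgneg : IntegrableOn (fun y => (g x - g (x + y)) / y ^ (1 + α)) (Ioi 0)) :
    genL α (fun t => f t * g t) x
      = f x * genL α g x + g x * genL α f x + LambdaPos α f g x + LambdaNeg α f g x := by
  obtain ⟨hcross, hcross_eq⟩ :=
    setIntegral_compl_zero_mul_increments hf hfpos hgpos hfneg hgneg
  have hF := (integrableOn_genL_integrand hfpos hfneg).const_mul (g x)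
  have hG := (integrableOn_genL_integrand hgpos hgneg).const_mul (f x)
  have hsplit : ∀ y, (f (x + y) * g (x + y) - f x * g x) / |y| ^ (1 + α)
      = f x * ((g (x + y) - g x) / |y| ^ (1 + α)) + g x * ((f (x + y) - f x) / |y| ^ (1 + α))
        + (f (x + y) - f x) * (g (x + y) - g x) / |y| ^ (1 + α) := fun y => by ring
  have hsum : IntegrableOn (fun y => f x * ((g (x + y) - g x) / |y| ^ (1 + α))
      + g x * ((f (x + y) - f x) / |y| ^ (1 + α))) {0}ᶜ := hG.add hF
  simp only [genL, LambdaPos, LambdaNeg, hsplit]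
  rw [integral_add hsum hcross, integral_add hG hF, integral_const_mul,
    integral_const_mul, hcross_eq]
  ring

end ProductRule

theorem extended_product_rule_generator_general (α : ℝ)
    (f g : ℝ → ℝ) (Cf : ℝ)
    (hfb : ∀ x, |f x| ≤ Cf)
    (hfIpos : ∀ x : ℝ,
      IntegrableOn (fun y => (f x - f (x - y)) / y ^ (1 + α)) (Ioi (0 : ℝ)))
    (hgIpos : ∀ x : ℝ,
      IntegrableOn (fun y => (g x - g (x - y)) / y ^ (1 + α)) (Ioi (0 : ℝ)))
    (hfIneg : ∀ x : ℝ,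
      IntegrableOn (fun y => (f x - f (x + y)) / y ^ (1 + α)) (Ioi (0 : ℝ)))
    (hgIneg : ∀ x : ℝ,
      IntegrableOn (fun y => (g x - g (x + y)) / y ^ (1 + α)) (Ioi (0 : ℝ))) :
    (∀ x : ℝ, genL α (fun t => f t * g t) x
        = f x * genL α g x + g x * genL α f x
          + LambdaPos α f g x + LambdaNeg α f g x) ∧
    (∀ x : ℝ, genL α f x = -Dpos α f x - Dneg α f x) ∧
    (∀ x : ℝ, genL α g x = -Dpos α g x - Dneg α g x) :=
  ⟨fun x => genL_mul hfb (hfIpos x) (hgIpos x) (hfIneg x) (hgIneg x),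
    fun x => genL_eq_neg_Dpos_sub_Dneg (hfIpos x) (hfIneg x),
    fun x => genL_eq_neg_Dpos_sub_Dneg (hgIpos x) (hgIneg x)⟩

/-- Extended product rule for the generator `𝓛` of the symmetric stable process,
together with the pointwise identity `𝓛 = −D_α − D_α^-`. -/
theorem extended_product_rule_generator (α : ℝ) (hα : α ∈ Ioo (0 : ℝ) 1)
    (f g : ℝ → ℝ) (Cf Cg : ℝ)
    (hfb : ∀ x, |f x| ≤ Cf) (hgb : ∀ x, |g x| ≤ Cg)
    (hfIpos : ∀ x : ℝ,
      IntegrableOn (fun y => (f x - f (x - y)) / y ^ (1 + α)) (Ioi (0 : ℝ)))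
    (hgIpos : ∀ x : ℝ,
      IntegrableOn (fun y => (g x - g (x - y)) / y ^ (1 + α)) (Ioi (0 : ℝ)))
    (hfIneg : ∀ x : ℝ,
      IntegrableOn (fun y => (f x - f (x + y)) / y ^ (1 + α)) (Ioi (0 : ℝ)))
    (hgIneg : ∀ x : ℝ,
      IntegrableOn (fun y => (g x - g (x + y)) / y ^ (1 + α)) (Ioi (0 : ℝ))) :
    (∀ x : ℝ, genL α (fun t => f t * g t) x
        = f x * genL α g x + g x * genL α f x
          + LambdaPos α f g x + LambdaNeg α f g x) ∧
    (∀ x : ℝ, genL α f x = -Dpos α f x - Dneg α f x) ∧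
    (∀ x : ℝ, genL α g x = -Dpos α g x - Dneg α g x) :=
  extended_product_rule_generator_general α f g Cf hfb hfIpos hgIpos hfIneg hgIneg
end

section
/- Let α ∈ (1/2, 1) and let K(x) = |x|^{α/2} e^{−|x|^{α/2}/2} for x ∈ ℝ. Then the function J(x) = ∫_ℝ |K(x−y) − K(x)| |y|^{−1−α} dy belongs to L²(ℝ), and there is a constant c depending only on α such that ‖J‖_{L²(ℝ)} ≤ c. -/
open MeasureTheory Set

/-- The radial function `K(x) = |x|^{α/2} e^{−|x|^{α/2}/2}`. -/
noncomputable def Kfun (α : ℝ) (x : ℝ) : ℝ :=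
  |x| ^ (α / 2) * Real.exp (-(1 / 2) * |x| ^ (α / 2))

/-- `J(x) = ∫_ℝ |K(x−y) − K(x)| |y|^{−1−α} dy`. -/
noncomputable def Jfun (α : ℝ) (x : ℝ) : ℝ :=
  ∫ y : ℝ, |Kfun α (x - y) - Kfun α x| / |y| ^ (1 + α)

/-!
Split the integral defining `J x` at `|y| = |x| / 2` and write `K x = k (|x| ^ (α / 2))` with
`k t = t * exp (-t / 2)`. For small `|y|` the mean value theorem bounds `|K (x - y) - K x|` by
`|y|` times the Lipschitz constant of `K` on `{z | |x| / 2 ≤ |z|}`, which is `O(|x| ^ (α / 2 - 1))`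
because `|k'| ≤ 1`, and also `O(|x|⁻¹)` because `t * |k' t| ≤ 4`. For large `|y|`, `K` is
`α / 2`-Hölder and bounded. Hence `J x = O(|x| ^ (-α / 2))` and `J x = O(|x| ^ (-α))`: the first
bound is square integrable near `0` since `α < 1`, the second near infinity since `α > 1 / 2`.
-/

lemma abs_rpow_sub_rpow_le {β u v : ℝ} (hβ0 : 0 ≤ β) (hβ1 : β ≤ 1) (hu : 0 ≤ u) (hv : 0 ≤ v) :
    |u ^ β - v ^ β| ≤ |u - v| ^ β := by
  wlog hvu : v ≤ u generalizing u v
  · rw [abs_sub_comm, abs_sub_comm u]; exact this hv hu (le_of_not_ge hvu)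
  have hsub := Real.rpow_add_le_add_rpow hv (sub_nonneg.2 hvu) hβ0 hβ1
  rw [add_sub_cancel] at hsub
  rw [abs_of_nonneg (sub_nonneg.2 (Real.rpow_le_rpow hv hvu hβ0)), abs_of_nonneg (sub_nonneg.2 hvu)]
  linarith

lemma abs_rpow_sub_rpow_le_mul {β r u v : ℝ} (hβ0 : 0 ≤ β) (hβ1 : β ≤ 1) (hr : 0 < r)
    (hu : r ≤ u) (hv : r ≤ v) : |u ^ β - v ^ β| ≤ β * r ^ (β - 1) * |u - v| := by
  refine (convex_Ici r).norm_image_sub_le_of_norm_hasDerivWithin_le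
    (fun t ht => (Real.hasDerivAt_rpow_const (Or.inl (hr.trans_le ht).ne')).hasDerivWithinAt)
    (fun t ht => ?_) hv hu
  have ht0 : 0 < t := hr.trans_le ht
  rw [Real.norm_eq_abs, abs_of_nonneg (by positivity)]
  exact mul_le_mul_of_nonneg_left (Real.rpow_le_rpow_of_nonpos hr ht (by linarith)) hβ0

lemma div_two_rpow_neg {a : ℝ} (ha : 0 ≤ a) (s : ℝ) : (a / 2) ^ (-s) = 2 ^ s * a ^ (-s) := by
  rw [Real.div_rpow ha zero_le_two, Real.rpow_neg zero_le_two, div_inv_eq_mul, mul_comm]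

lemma sq_le_mul_rpow_neg {a c s x : ℝ} (ha : 0 ≤ a) (h : a ≤ c * |x| ^ (-s)) :
    a ^ 2 ≤ c ^ 2 * |x| ^ (-(2 * s)) := by
  calc a ^ 2 ≤ (c * |x| ^ (-s)) ^ 2 := pow_le_pow_left₀ ha h 2
    _ = c ^ 2 * |x| ^ (-(2 * s)) := by
        rw [mul_pow, ← Real.rpow_natCast (|x| ^ (-s)), ← Real.rpow_mul (abs_nonneg x)]
        ring_nf

section RadialIntegrals

variable {S : Set ℝ} {f : ℝ → ℝ}

lemma integrable_indicator_comp_abs (hS : MeasurableSet S) (hS0 : S ⊆ Ioi 0)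
    (hf : IntegrableOn f S) : Integrable fun y => S.indicator f |y| := by
  have hfS : Integrable (S.indicator f) := hf.integrable_indicator hS
  refine (hfS.add hfS.comp_neg).congr (Filter.Eventually.of_forall fun y => ?_)
  have hnot : ∀ t ≤ 0, S.indicator f t = 0 := fun t ht =>
    indicator_of_notMem (fun htS => (hS0 htS).not_ge ht) _
  rcases le_total 0 y with hy | hy
  · simp [abs_of_nonneg hy, hnot (-y) (neg_nonpos.2 hy)]
  · simp [abs_of_nonpos hy, hnot y hy]

lemma integral_indicator_comp_abs (hS : MeasurableSet S) (hS0 : S ⊆ Ioi 0) :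
    ∫ y, S.indicator f |y| = 2 * ∫ t in S, f t := by
  rw [integral_comp_abs, setIntegral_indicator hS, inter_eq_right.2 hS0]

lemma integral_Ioc_zero_rpow {p r : ℝ} (hp : -1 < p) (hr : 0 ≤ r) :
    ∫ t in Ioc 0 r, t ^ p = r ^ (p + 1) / (p + 1) := by
  rw [← intervalIntegral.integral_of_le hr, integral_rpow (Or.inl hp),
    Real.zero_rpow (by linarith), sub_zero]

lemma integrable_indicator_Ioc_rpow_comp_abs {p r : ℝ} (hp : -1 < p) (hr : 0 ≤ r) :
    Integrable fun y => (Ioc 0 r).indicator (· ^ p) |y| :=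
  integrable_indicator_comp_abs measurableSet_Ioc Ioc_subset_Ioi_self
    ((intervalIntegrable_iff_integrableOn_Ioc_of_le hr).1
      (intervalIntegral.intervalIntegrable_rpow' hp))

lemma integrable_indicator_Ioi_rpow_comp_abs {p r : ℝ} (hp : p < -1) (hr : 0 < r) :
    Integrable fun y => (Ioi r).indicator (· ^ p) |y| :=
  integrable_indicator_comp_abs measurableSet_Ioi (Ioi_subset_Ioi hr.le)
    (integrableOn_Ioi_rpow_of_lt hp hr)

end RadialIntegrals

lemma integral_abs_sub_div_rpow_le {f : ℝ → ℝ} {x r α β L B : ℝ} (hr : 0 < r) (hβα : β < α)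
    (hα : α < 1) (hnear : ∀ y, |y| ≤ r → |f (x - y) - f x| ≤ L * |y|)
    (hfar : ∀ y, r < |y| → |f (x - y) - f x| ≤ B * |y| ^ β) :
    ∫ y, |f (x - y) - f x| / |y| ^ (1 + α)
      ≤ 2 * (L * (r ^ (1 - α) / (1 - α)) + B * (r ^ (β - α) / (α - β))) := by
  set g : ℝ → ℝ := fun y => L * (Ioc 0 r).indicator (· ^ (-α)) |y|
    + B * (Ioi r).indicator (· ^ (β - (1 + α))) |y|
  have hIoc := integrable_indicator_Ioc_rpow_comp_abs (p := -α) (by linarith) hr.le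
  have hIoi := integrable_indicator_Ioi_rpow_comp_abs (p := β - (1 + α)) (by linarith) hr
  have hle : ∀ y, |f (x - y) - f x| / |y| ^ (1 + α) ≤ g y := by
    intro y
    rcases eq_or_ne y 0 with rfl | hy0
    · simp [g, hr.le]
    have hy : 0 < |y| := abs_pos.2 hy0
    rcases le_or_gt |y| r with hyr | hyr
    · have hdiv : |y| / |y| ^ (1 + α) = |y| ^ (-α) := by
        rw [Real.rpow_add hy, Real.rpow_one, Real.rpow_neg hy.le, div_mul_cancel_left₀ hy.ne']
      calc |f (x - y) - f x| / |y| ^ (1 + α) ≤ L * |y| / |y| ^ (1 + α) := by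
            gcongr; exact hnear y hyr
        _ = g y := by
            simp [g, hy, hyr, hyr.not_gt, mul_div_assoc, hdiv]
    · calc |f (x - y) - f x| / |y| ^ (1 + α) ≤ B * |y| ^ β / |y| ^ (1 + α) := by
            gcongr; exact hfar y hyr
        _ = g y := by
            simp [g, hyr, hyr.not_ge, mul_div_assoc, Real.rpow_sub hy]
  calc ∫ y, |f (x - y) - f x| / |y| ^ (1 + α) ≤ ∫ y, g y :=
        integral_mono_of_nonneg (Filter.Eventually.of_forall fun y => by positivity)
          ((hIoc.const_mul L).add (hIoi.const_mul B)) (Filter.Eventually.of_forall hle)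
    _ = 2 * (L * (r ^ (1 - α) / (1 - α)) + B * (r ^ (β - α) / (α - β))) := by
        rw [integral_add (hIoc.const_mul L) (hIoi.const_mul B), integral_const_mul,
          integral_const_mul, integral_indicator_comp_abs measurableSet_Ioc Ioc_subset_Ioi_self,
          integral_indicator_comp_abs measurableSet_Ioi (Ioi_subset_Ioi hr.le),
          integral_Ioc_zero_rpow (by linarith) hr.le, integral_Ioi_rpow_of_lt (by linarith) hr]
        have hβα' : β - α ≠ 0 := by linarith
        have hαβ : α - β ≠ 0 := by linarith
        rw [show -α + 1 = 1 - α by ring, show β - (1 + α) + 1 = β - α by ring]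
        field_simp
        ring

theorem memLp_two_of_le_rpow_neg {f : ℝ → ℝ} {s t C₁ C₂ : ℝ} (hf : AEStronglyMeasurable f)
    (hf0 : ∀ x, 0 ≤ f x) (hs : s < 1 / 2) (ht : 1 / 2 < t)
    (h₁ : ∀ x ≠ 0, f x ≤ C₁ * |x| ^ (-s)) (h₂ : ∀ x ≠ 0, f x ≤ C₂ * |x| ^ (-t)) :
    MemLp f 2 := by
  rw [memLp_two_iff_integrable_sq hf]
  have hg : Integrable fun x => C₁ ^ 2 * (Ioc 0 1).indicator (· ^ (-(2 * s))) |x|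
      + C₂ ^ 2 * (Ioi 1).indicator (· ^ (-(2 * t))) |x| :=
    ((integrable_indicator_Ioc_rpow_comp_abs (by linarith) zero_le_one).const_mul _).add
      ((integrable_indicator_Ioi_rpow_comp_abs (by linarith) one_pos).const_mul _)
  refine hg.mono' (hf.pow 2) ?_
  filter_upwards [Measure.ae_ne volume 0] with x hx
  have hx' : 0 < |x| := abs_pos.2 hx
  rw [Real.norm_of_nonneg (sq_nonneg _)]
  rcases le_or_gt |x| 1 with hx1 | hx1
  · simpa [hx', hx1, hx1.not_gt] using sq_le_mul_rpow_neg (hf0 x) (h₁ x hx)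
  · simpa [hx1, hx1.not_ge] using sq_le_mul_rpow_neg (hf0 x) (h₂ x hx)

section Profile

open Real

noncomputable def kProfile (t : ℝ) : ℝ := t * exp (-(1 / 2) * t)

noncomputable def kProfile' (t : ℝ) : ℝ := exp (-(1 / 2) * t) * (1 - t / 2)

lemma Kfun_eq_kProfile (α x : ℝ) : Kfun α x = kProfile (|x| ^ (α / 2)) := rfl

lemma hasDerivAt_kProfile (t : ℝ) : HasDerivAt kProfile (kProfile' t) t := by
  have h : HasDerivAt (fun s => s * exp (-(1 / 2) * s))
      (1 * exp (-(1 / 2) * t) + t * (exp (-(1 / 2) * t) * (-(1 / 2) * 1))) t :=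
    (hasDerivAt_id' t).mul (((hasDerivAt_id' t).const_mul (-(1 / 2))).exp)
  exact h.congr_deriv (by rw [kProfile']; ring)

lemma kProfile_nonneg {t : ℝ} (ht : 0 ≤ t) : 0 ≤ kProfile t := by
  unfold kProfile; positivity

lemma exp_neg_half_mul (t : ℝ) : exp (-(1 / 2) * t) = (exp (t / 2))⁻¹ := by
  rw [← exp_neg]; ring_nf

lemma kProfile_le_two (t : ℝ) : kProfile t ≤ 2 := by
  rw [kProfile, exp_neg_half_mul, ← div_eq_mul_inv, div_le_iff₀ (exp_pos _)]
  linarith [add_one_le_exp (t / 2)]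

lemma abs_kProfile' (t : ℝ) : |kProfile' t| = |1 - t / 2| / exp (t / 2) := by
  rw [kProfile', abs_mul, abs_of_pos (exp_pos _), exp_neg_half_mul]
  ring

lemma abs_kProfile'_le_one {t : ℝ} (ht : 0 ≤ t) : |kProfile' t| ≤ 1 := by
  rw [abs_kProfile', div_le_one (exp_pos _), abs_le]
  constructor <;> linarith [add_one_le_exp (t / 2), one_le_exp (by linarith : 0 ≤ t / 2)]

lemma mul_abs_kProfile'_le {t : ℝ} (ht : 0 ≤ t) : t * |kProfile' t| ≤ 4 := by
  rw [abs_kProfile', ← mul_div_assoc, div_le_iff₀ (exp_pos _)]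
  have hexp := quadratic_le_exp_of_nonneg (by linarith : 0 ≤ t / 2)
  have habs : |1 - t / 2| ≤ 1 + t / 2 := abs_le.2 ⟨by linarith, by linarith⟩
  nlinarith

lemma abs_kProfile_sub_le {a C s t : ℝ} (hC : ∀ u, a ≤ u → |kProfile' u| ≤ C)
    (hs : a ≤ s) (ht : a ≤ t) : |kProfile s - kProfile t| ≤ C * |s - t| :=
  (convex_Ici a).norm_image_sub_le_of_norm_hasDerivWithin_le
    (fun u _ => (hasDerivAt_kProfile u).hasDerivWithinAt) hC ht hs

end Profile

lemma abs_Kfun_sub_Kfun_le {α : ℝ} (hα0 : 0 ≤ α) (hα2 : α ≤ 2) (u v : ℝ) :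
    |Kfun α u - Kfun α v| ≤ |u - v| ^ (α / 2) := by
  have hβ0 : 0 ≤ α / 2 := by linarith
  rw [Kfun_eq_kProfile, Kfun_eq_kProfile]
  calc |kProfile (|u| ^ (α / 2)) - kProfile (|v| ^ (α / 2))|
        ≤ 1 * |(|u| ^ (α / 2) - |v| ^ (α / 2))| :=
        abs_kProfile_sub_le (fun t ht => abs_kProfile'_le_one ht) (by positivity) (by positivity)
    _ ≤ |(|u| - |v|)| ^ (α / 2) := by
        rw [one_mul]; exact abs_rpow_sub_rpow_le hβ0 (by linarith) (abs_nonneg u) (abs_nonneg v)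
    _ ≤ |u - v| ^ (α / 2) :=
        Real.rpow_le_rpow (abs_nonneg _) (abs_abs_sub_abs_le_abs_sub u v) hβ0

lemma abs_Kfun_sub_Kfun_le_two (α u v : ℝ) : |Kfun α u - Kfun α v| ≤ 2 := by
  rw [Kfun_eq_kProfile, Kfun_eq_kProfile]
  exact abs_sub_le_of_nonneg_of_le (kProfile_nonneg (by positivity)) (kProfile_le_two _)
    (kProfile_nonneg (by positivity)) (kProfile_le_two _)

lemma abs_Kfun_sub_Kfun_le_mul {α r C u v : ℝ} (hα0 : 0 ≤ α) (hα2 : α ≤ 2) (hr : 0 < r)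
    (hu : r ≤ |u|) (hv : r ≤ |v|) (hC : ∀ t, r ^ (α / 2) ≤ t → |kProfile' t| ≤ C) :
    |Kfun α u - Kfun α v| ≤ C * (α / 2 * r ^ (α / 2 - 1)) * |u - v| := by
  have hβ0 : 0 ≤ α / 2 := by linarith
  have hC0 : 0 ≤ C := (abs_nonneg _).trans (hC _ le_rfl)
  rw [Kfun_eq_kProfile, Kfun_eq_kProfile]
  calc |kProfile (|u| ^ (α / 2)) - kProfile (|v| ^ (α / 2))|
        ≤ C * |(|u| ^ (α / 2) - |v| ^ (α / 2))| :=
        abs_kProfile_sub_le hC (Real.rpow_le_rpow hr.le hu hβ0) (Real.rpow_le_rpow hr.le hv hβ0)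
    _ ≤ C * (α / 2 * r ^ (α / 2 - 1) * |(|u| - |v|)|) := by
        gcongr; exact abs_rpow_sub_rpow_le_mul hβ0 (by linarith) hr hu hv
    _ ≤ C * (α / 2 * r ^ (α / 2 - 1)) * |u - v| := by
        rw [← mul_assoc]
        exact mul_le_mul_of_nonneg_left (abs_abs_sub_abs_le_abs_sub u v) (by positivity)

lemma Jfun_le_rpow_neg_half {α x : ℝ} (hα0 : 0 < α) (hα1 : α < 1) (hx : x ≠ 0) :
    Jfun α x ≤ 2 ^ (α / 2) * (α / (1 - α) + 4 / α) * |x| ^ (-(α / 2)) := by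
  set r := |x| / 2 with hr_def
  have hr : 0 < r := by positivity
  have hnear : ∀ y, |y| ≤ r → |Kfun α (x - y) - Kfun α x| ≤ α / 2 * r ^ (α / 2 - 1) * |y| := by
    intro y hy
    have hxy : r ≤ |x - y| := by linarith [abs_sub_abs_le_abs_sub x y]
    have hx' : r ≤ |x| := by linarith [abs_nonneg x]
    simpa using abs_Kfun_sub_Kfun_le_mul (C := 1) hα0.le (by linarith) hr hxy hx'
      (fun t ht => abs_kProfile'_le_one ((Real.rpow_nonneg hr.le _).trans ht))
  have hfar : ∀ y, r < |y| → |Kfun α (x - y) - Kfun α x| ≤ 1 * |y| ^ (α / 2) := by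
    intro y _
    simpa using abs_Kfun_sub_Kfun_le hα0.le (by linarith) (x - y) x
  have hnear_term :
      α / 2 * r ^ (α / 2 - 1) * (r ^ (1 - α) / (1 - α)) = α / 2 / (1 - α) * r ^ (-(α / 2)) := by
    rw [mul_div_assoc', mul_assoc, ← Real.rpow_add hr]; ring_nf
  have hfar_term : r ^ (α / 2 - α) = r ^ (-(α / 2)) := by ring_nf
  calc Jfun α x
      ≤ 2 * (α / 2 * r ^ (α / 2 - 1) * (r ^ (1 - α) / (1 - α))
          + 1 * (r ^ (α / 2 - α) / (α - α / 2))) :=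
        integral_abs_sub_div_rpow_le hr (by linarith) hα1 hnear hfar
    _ = (α / (1 - α) + 4 / α) * r ^ (-(α / 2)) := by
        have : 1 - α ≠ 0 := by linarith
        rw [hnear_term, hfar_term]
        field_simp
        ring
    _ = 2 ^ (α / 2) * (α / (1 - α) + 4 / α) * |x| ^ (-(α / 2)) := by
        rw [hr_def, div_two_rpow_neg (abs_nonneg x)]; ring

lemma Jfun_le_rpow_neg {α x : ℝ} (hα0 : 0 < α) (hα1 : α < 1) (hx : x ≠ 0) :
    Jfun α x ≤ 2 ^ α * (4 * α / (1 - α) + 4 / α) * |x| ^ (-α) := by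
  set r := |x| / 2 with hr_def
  have hr : 0 < r := by positivity
  have hderiv : ∀ t, r ^ (α / 2) ≤ t → |kProfile' t| ≤ 4 * r ^ (-(α / 2)) := by
    intro t ht
    have hr' : 0 < r ^ (α / 2) := by positivity
    rw [Real.rpow_neg hr.le, ← div_eq_mul_inv, le_div_iff₀ hr']
    calc |kProfile' t| * r ^ (α / 2) ≤ |kProfile' t| * t := by gcongr
      _ ≤ 4 := by rw [mul_comm]; exact mul_abs_kProfile'_le (hr'.le.trans ht)
  have hnear : ∀ y, |y| ≤ r →
      |Kfun α (x - y) - Kfun α x| ≤ 4 * r ^ (-(α / 2)) * (α / 2 * r ^ (α / 2 - 1)) * |y| := by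
    intro y hy
    have hxy : r ≤ |x - y| := by linarith [abs_sub_abs_le_abs_sub x y]
    have hx' : r ≤ |x| := by linarith [abs_nonneg x]
    simpa using abs_Kfun_sub_Kfun_le_mul hα0.le (by linarith) hr hxy hx' hderiv
  have hfar : ∀ y, r < |y| → |Kfun α (x - y) - Kfun α x| ≤ 2 * |y| ^ (0 : ℝ) := by
    intro y _
    rw [Real.rpow_zero, mul_one]
    exact abs_Kfun_sub_Kfun_le_two α _ _
  have hnear_term : 4 * r ^ (-(α / 2)) * (α / 2 * r ^ (α / 2 - 1)) * (r ^ (1 - α) / (1 - α))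
      = 2 * α / (1 - α) * r ^ (-α) := by
    have hexp : r ^ (-(α / 2)) * r ^ (α / 2 - 1) * r ^ (1 - α) = r ^ (-α) := by
      rw [← Real.rpow_add hr, ← Real.rpow_add hr]; ring_nf
    rw [← hexp]; ring
  calc Jfun α x
      ≤ 2 * (4 * r ^ (-(α / 2)) * (α / 2 * r ^ (α / 2 - 1)) * (r ^ (1 - α) / (1 - α))
          + 2 * (r ^ (0 - α) / (α - 0))) :=
        integral_abs_sub_div_rpow_le hr hα0 hα1 hnear hfar
    _ = (4 * α / (1 - α) + 4 / α) * r ^ (-α) := by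
        have : 1 - α ≠ 0 := by linarith
        rw [hnear_term, zero_sub, sub_zero]
        field_simp
        ring
    _ = 2 ^ α * (4 * α / (1 - α) + 4 / α) * |x| ^ (-α) := by
        rw [hr_def, div_two_rpow_neg (abs_nonneg x)]; ring

lemma measurable_Kfun (α : ℝ) : Measurable (Kfun α) := by
  unfold Kfun; fun_prop

lemma aestronglyMeasurable_Jfun (α : ℝ) : AEStronglyMeasurable (Jfun α) := by
  have hK := measurable_Kfun α
  have hF : Measurable fun p : ℝ × ℝ => |Kfun α (p.1 - p.2) - Kfun α p.1| / |p.2| ^ (1 + α) := by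
    fun_prop
  exact hF.stronglyMeasurable.integral_prod_right'.aestronglyMeasurable

lemma Jfun_nonneg (α x : ℝ) : 0 ≤ Jfun α x :=
  integral_nonneg fun _ => by positivity

/-- For `α ∈ (1/2, 1)`, the function `J` belongs to `L²(ℝ)` and its `L²`-norm is
bounded by a constant depending only on `α`. -/
theorem J_mem_L2 (α : ℝ) (hα : α ∈ Ioo (1 / 2 : ℝ) 1) :
    ∃ c : ℝ, 0 < c ∧ MemLp (Jfun α) 2 (volume : Measure ℝ) ∧
      eLpNorm (Jfun α) 2 (volume : Measure ℝ) ≤ ENNReal.ofReal c := by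
  obtain ⟨hα_gt, hα_lt⟩ := hα
  have hα0 : 0 < α := by linarith
  have hJ : MemLp (Jfun α) 2 volume :=
    memLp_two_of_le_rpow_neg (aestronglyMeasurable_Jfun α) (Jfun_nonneg α) (by linarith) hα_gt
      (fun _ hx => Jfun_le_rpow_neg_half hα0 hα_lt hx) (fun _ hx => Jfun_le_rpow_neg hα0 hα_lt hx)
  refine ⟨(eLpNorm (Jfun α) 2 volume).toReal + 1, by positivity, hJ, ?_⟩
  exact (ENNReal.le_ofReal_iff_toReal_le hJ.eLpNorm_ne_top (by positivity)).2 (by linarith)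
end

section
/- Let α ∈ (0,1) and K(x) = |x|^{α/2} e^{−|x|^{α/2}/2}. Then there is a constant c depending only on α such that ∫_ℝ ( ∫_{|y|>1} |K(x−y) − K(x)| |y|^{−1−α} dy )² dx ≤ c. -/
open MeasureTheory Set

/-!
Write `T x = ∫_{|y|>1} |K(x-y) - K x| |y|^{-1-α} dy`. Since `0 ≤ K ≤ 2`, `T` is bounded
uniformly by a multiple of `∫_{|y|>1} |y|^{-1-α} dy < ∞`; by Tonelli and translation invariance
of Lebesgue measure, `∫ T ≤ 2 ‖K‖₁ ∫_{|y|>1} |y|^{-1-α} dy`. Hence `∫ T² ≤ (sup T) ∫ T < ∞`.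
-/

open scoped ENNReal

section Translation

variable {G E : Type*} [AddGroup G] [MeasurableSpace G] [NormedAddCommGroup E] {μ : Measure G}

theorem lintegral_enorm_sub_translate_le [MeasurableAdd G] [μ.IsAddRightInvariant] {f : G → E}
    (hf : StronglyMeasurable f) (y : G) :
    ∫⁻ x, ‖f (x - y) - f x‖ₑ ∂μ ≤ 2 * ∫⁻ x, ‖f x‖ₑ ∂μ :=
  calc ∫⁻ x, ‖f (x - y) - f x‖ₑ ∂μ ≤ ∫⁻ x, (‖f (x - y)‖ₑ + ‖f x‖ₑ) ∂μ :=
        lintegral_mono fun x => enorm_sub_le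
    _ = 2 * ∫⁻ x, ‖f x‖ₑ ∂μ := by
        rw [lintegral_add_right _ hf.enorm,
          lintegral_sub_right_eq_self (fun x => ‖f x‖ₑ) y, two_mul]

theorem lintegral_enorm_integral_translate_le [MeasurableAdd G] [MeasurableSub₂ G]
    [μ.IsAddRightInvariant] [SFinite μ] {ν : Measure G} [SFinite ν]
    {f : G → E} (hf : StronglyMeasurable f) {k : G → ℝ} (hk : Measurable k) :
    ∫⁻ x, ‖∫ y, ‖f (x - y) - f x‖ * k y ∂ν‖ₑ ∂μ ≤
      2 * (∫⁻ x, ‖f x‖ₑ ∂μ) * ∫⁻ y, ‖k y‖ₑ ∂ν := by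
  have hmeas : Measurable fun p : G × G => ‖f (p.1 - p.2) - f p.1‖ₑ * ‖k p.2‖ₑ :=
    ((hf.comp_measurable measurable_sub).sub (hf.comp_measurable measurable_fst)).enorm.mul
      (hk.comp measurable_snd).enorm
  calc ∫⁻ x, ‖∫ y, ‖f (x - y) - f x‖ * k y ∂ν‖ₑ ∂μ
      ≤ ∫⁻ x, ∫⁻ y, ‖f (x - y) - f x‖ₑ * ‖k y‖ₑ ∂ν ∂μ := by
        refine lintegral_mono fun x => (enorm_integral_le_lintegral_enorm _).trans_eq ?_
        simp only [enorm_mul, enorm_norm]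
    _ = ∫⁻ y, (∫⁻ x, ‖f (x - y) - f x‖ₑ ∂μ) * ‖k y‖ₑ ∂ν := by
        rw [lintegral_lintegral_swap hmeas.aemeasurable]
        exact lintegral_congr fun y => lintegral_mul_const' _ _ enorm_ne_top
    _ ≤ ∫⁻ y, 2 * (∫⁻ x, ‖f x‖ₑ ∂μ) * ‖k y‖ₑ ∂ν :=
        lintegral_mono fun y => by gcongr; exact lintegral_enorm_sub_translate_le hf y
    _ = 2 * (∫⁻ x, ‖f x‖ₑ ∂μ) * ∫⁻ y, ‖k y‖ₑ ∂ν := lintegral_const_mul _ hk.enorm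

theorem norm_integral_translate_le {ν : Measure G} {f : G → E} {M : ℝ} (hf : ∀ x, ‖f x‖ ≤ M)
    {k : G → ℝ} (hk : Integrable k ν) (x : G) :
    ‖∫ y, ‖f (x - y) - f x‖ * k y ∂ν‖ ≤ 2 * M * ∫ y, |k y| ∂ν := by
  rw [← integral_const_mul]
  refine norm_integral_le_of_norm_le (hk.norm.const_mul _) (.of_forall fun y => ?_)
  rw [norm_mul, norm_norm, Real.norm_eq_abs]
  gcongr
  exact (norm_sub_le _ _).trans (by linarith [hf (x - y), hf x])

end Translation

theorem lintegral_ofReal_sq_le_mul_lintegral_enorm {X : Type*} [MeasurableSpace X]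
    {μ : Measure X} {g : X → ℝ} {B : ℝ} (hg : ∀ x, |g x| ≤ B) :
    ∫⁻ x, ENNReal.ofReal (g x ^ 2) ∂μ ≤ ENNReal.ofReal B * ∫⁻ x, ‖g x‖ₑ ∂μ := by
  rw [← lintegral_const_mul' _ _ ENNReal.ofReal_ne_top]
  refine lintegral_mono fun x => ?_
  rw [Real.enorm_eq_ofReal_abs, ← ENNReal.ofReal_mul (by linarith [hg x, abs_nonneg (g x)]),
    ← sq_abs]
  exact ENNReal.ofReal_le_ofReal (by rw [sq]; gcongr; exacts [hg x])

theorem integrableOn_inv_norm_rpow_of_finrank_lt {E : Type*} [NormedAddCommGroup E]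
    [NormedSpace ℝ E] [FiniteDimensional ℝ E] [MeasurableSpace E] [BorelSpace E] {μ : Measure E}
    [μ.IsAddHaarMeasure] {r : ℝ} (hr : (Module.finrank ℝ E : ℝ) < r) :
    IntegrableOn (fun y : E => (‖y‖ ^ r)⁻¹) {y | 1 < ‖y‖} μ := by
  have hr0 : 0 ≤ r := (Nat.cast_nonneg _).trans hr.le
  refine ((integrable_one_add_norm hr).const_mul (2 ^ r)).integrableOn.mono'
    (by fun_prop) ((ae_restrict_iff' ?_).2 (.of_forall fun y (hy : 1 < ‖y‖) => ?_))
  · exact measurableSet_lt measurable_const measurable_norm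
  have hy0 : 0 < ‖y‖ := one_pos.trans hy
  rw [Real.norm_of_nonneg (by positivity), Real.rpow_neg (by positivity), ← div_eq_mul_inv,
    le_div_iff₀ (by positivity), ← div_eq_inv_mul, div_le_iff₀ (by positivity),
    ← Real.mul_rpow zero_le_two hy0.le]
  exact Real.rpow_le_rpow (by positivity) (by linarith) hr0

theorem IntegrableOn.integrable_comp_abs {E : Type*} [NormedAddCommGroup E] {f : ℝ → E}
    (hf : IntegrableOn f (Ioi 0)) : Integrable fun x => f |x| := by
  have hpos : IntegrableOn (fun x => f |x|) (Ioi 0) :=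
    hf.congr_fun (fun x hx => by rw [abs_of_pos hx]) measurableSet_Ioi
  rw [← integrableOn_univ, ← Iic_union_Ioi (a := (0 : ℝ)), integrableOn_union]
  refine ⟨?_, hpos⟩
  rw [← (Measure.measurePreserving_neg (volume : Measure ℝ)).integrableOn_comp_preimage
      (Homeomorph.neg ℝ).measurableEmbedding]
  simpa [Function.comp_def, integrableOn_Ici_iff_integrableOn_Ioi] using hpos

namespace Kfun

theorem nonneg (α x : ℝ) : 0 ≤ Kfun α x := by
  unfold Kfun; positivity

theorem le_two (α x : ℝ) : Kfun α x ≤ 2 := by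
  have ht : 0 ≤ |x| ^ (α / 2) := by positivity
  have hexp := Real.add_one_le_exp (1 / 2 * |x| ^ (α / 2))
  rw [Kfun, neg_mul, Real.exp_neg, ← div_eq_mul_inv, div_le_iff₀ (Real.exp_pos _)]
  linarith

theorem norm_le_two (α x : ℝ) : ‖Kfun α x‖ ≤ 2 := by
  rw [Real.norm_of_nonneg (nonneg α x)]; exact le_two α x

theorem continuous {α : ℝ} (hα : 0 < α) : Continuous (Kfun α) := by
  unfold Kfun
  have : Continuous fun x : ℝ => |x| ^ (α / 2) :=
    continuous_abs.rpow_const fun _ => Or.inr (by positivity)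
  fun_prop

theorem integrable {α : ℝ} (hα : 0 < α) : Integrable (Kfun α) :=
  IntegrableOn.integrable_comp_abs
    (f := fun r => r ^ (α / 2) * Real.exp (-(1 / 2) * r ^ (α / 2)))
    (integrableOn_rpow_mul_exp_neg_mul_rpow (by linarith) (by positivity) one_half_pos)

end Kfun

/-- For `α ∈ (0,1)`,
`∫_ℝ ( ∫_{|y|>1} |K(x−y) − K(x)| |y|^{−1−α} dy )² dx ≤ c` for a constant `c`
depending only on `α`. -/
theorem I1_bound (α : ℝ) (hα : α ∈ Ioo (0 : ℝ) 1) :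
    ∃ c : ℝ, 0 < c ∧
      ∫⁻ x : ℝ, ENNReal.ofReal
          ((∫ y in {y : ℝ | 1 < |y|}, |Kfun α (x - y) - Kfun α x| / |y| ^ (1 + α)) ^ 2)
        ≤ ENNReal.ofReal c := by
  set S := {y : ℝ | 1 < |y|}
  set w : ℝ → ℝ := fun y => (|y| ^ (1 + α))⁻¹
  have hw : IntegrableOn w S :=
    integrableOn_inv_norm_rpow_of_finrank_lt (E := ℝ) (by simpa using hα.1)
  have hK := Kfun.integrable hα.1
  set B := 2 * 2 * ∫ y in S, |w y|
  set A := 2 * (∫⁻ x, ‖Kfun α x‖ₑ) * ∫⁻ y in S, ‖w y‖ₑ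
  have hA : A ≠ ⊤ :=
    ENNReal.mul_ne_top (ENNReal.mul_ne_top ENNReal.ofNat_ne_top hK.hasFiniteIntegral.ne)
      hw.hasFiniteIntegral.ne
  refine ⟨(ENNReal.ofReal B * A).toReal + 1, by positivity, ?_⟩
  have hT (x : ℝ) : (∫ y in S, |Kfun α (x - y) - Kfun α x| / |y| ^ (1 + α)) =
      ∫ y in S, ‖Kfun α (x - y) - Kfun α x‖ * w y := by
    simp only [div_eq_mul_inv, Real.norm_eq_abs, w]
  simp_rw [hT]
  calc _ ≤ ENNReal.ofReal B * ∫⁻ x, ‖∫ y in S, ‖Kfun α (x - y) - Kfun α x‖ * w y‖ₑ :=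
        lintegral_ofReal_sq_le_mul_lintegral_enorm fun x =>
          norm_integral_translate_le (Kfun.norm_le_two α) hw x
    _ ≤ ENNReal.ofReal B * A := by
        gcongr
        exact lintegral_enorm_integral_translate_le (Kfun.continuous hα.1).stronglyMeasurable
          (by fun_prop)
    _ ≤ _ := (ENNReal.le_ofReal_iff_toReal_le (by finiteness) (by positivity)).2 (by linarith)
end

section
/- Let α ∈ (1/2, 1) and K(x) = |x|^{α/2} e^{−|x|^{α/2}/2}. Then there is a constant c depending only on α such that ∫_{|x|>2} ( ∫_{|y|<1} |K(x−y) − K(x)| |y|^{−1−α} dy )² dx ≤ c. -/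
/-!
For `|x| > 2` and `|y| < 1` both `|x - y|` and `|x|` are at least `|x| / 2 ≥ 1`, and on
`[m, ∞)` with `m ≥ 1` the radial profile `t ↦ t^β e^{-t^β/2}` (`β = α/2`) is Lipschitz with
constant `α e^{-m^β/4}`. Hence the inner integral is at most
`α e^{-|x/2|^β/4} ∫_{|y|<1} |y|^{-α} dy`, which is finite because `α < 1`, and its square decays
like `e^{-|x/2|^β/2}`, which is integrable over `ℝ`.
-/

open MeasureTheory Set

open Real

noncomputable def radialProfile (β t : ℝ) : ℝ :=
  t ^ β * exp (-(1 / 2) * t ^ β)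

lemma Kfun_eq_radialProfile (α x : ℝ) : Kfun α x = radialProfile (α / 2) |x| := rfl

lemma abs_one_sub_half_mul_exp_le {u : ℝ} (hu : 0 ≤ u) :
    |1 - u / 2| * exp (-(1 / 2) * u) ≤ 2 * exp (-(u / 4)) := by
  have h : |1 - u / 2| ≤ 2 * exp (u / 4) := by
    rw [abs_le]; constructor <;> nlinarith [add_one_le_exp (u / 4)]
  calc |1 - u / 2| * exp (-(1 / 2) * u) ≤ 2 * exp (u / 4) * exp (-(1 / 2) * u) := by gcongr
    _ = 2 * exp (-(u / 4)) := by rw [mul_assoc, ← exp_add]; congr 2; ring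

lemma hasDerivAt_radialProfile (β : ℝ) {t : ℝ} (ht : 0 < t) :
    HasDerivAt (radialProfile β)
      (β * t ^ (β - 1) * ((1 - t ^ β / 2) * exp (-(1 / 2) * t ^ β))) t := by
  have hpow := hasDerivAt_rpow_const (x := t) (p := β) (Or.inl ht.ne')
  exact (hpow.mul (hpow.const_mul (-(1 / 2))).exp).congr_deriv (by ring)

lemma abs_deriv_radialProfile_le {β m t : ℝ} (hβ₀ : 0 ≤ β) (hβ₁ : β ≤ 1) (hm : 1 ≤ m)
    (hmt : m ≤ t) :
    |β * t ^ (β - 1) * ((1 - t ^ β / 2) * exp (-(1 / 2) * t ^ β))|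
      ≤ 2 * β * exp (-(m ^ β / 4)) := by
  have ht : 1 ≤ t := hm.trans hmt
  have hpow : t ^ (β - 1) ≤ 1 := rpow_le_one_of_one_le_of_nonpos ht (by linarith)
  have hdecay : exp (-(t ^ β / 4)) ≤ exp (-(m ^ β / 4)) := by gcongr
  rw [abs_mul, abs_mul, abs_mul, abs_of_nonneg hβ₀,
    abs_of_nonneg (by positivity : 0 ≤ t ^ (β - 1)), abs_of_pos (exp_pos _)]
  calc β * t ^ (β - 1) * (|1 - t ^ β / 2| * exp (-(1 / 2) * t ^ β))
      ≤ β * 1 * (2 * exp (-(t ^ β / 4))) := by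
        gcongr β * ?_ * ?_
        exact abs_one_sub_half_mul_exp_le (by positivity)
    _ ≤ 2 * β * exp (-(m ^ β / 4)) := by nlinarith

lemma abs_radialProfile_sub_le {β m s t : ℝ} (hβ₀ : 0 ≤ β) (hβ₁ : β ≤ 1) (hm : 1 ≤ m)
    (hs : m ≤ s) (ht : m ≤ t) :
    |radialProfile β s - radialProfile β t| ≤ 2 * β * exp (-(m ^ β / 4)) * |s - t| := by
  have hderiv : ∀ z ∈ Ici m, HasDerivWithinAt (radialProfile β)
      (β * z ^ (β - 1) * ((1 - z ^ β / 2) * exp (-(1 / 2) * z ^ β))) (Ici m) z :=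
    fun z hz => (hasDerivAt_radialProfile β (by linarith [mem_Ici.mp hz])).hasDerivWithinAt
  simpa only [Real.norm_eq_abs] using (convex_Ici m).norm_image_sub_le_of_norm_hasDerivWithin_le
    hderiv (fun z hz => abs_deriv_radialProfile_le hβ₀ hβ₁ hm hz) ht hs

lemma abs_Kfun_sub_le {α x y : ℝ} (hα₀ : 0 ≤ α) (hα₂ : α ≤ 2) (hx : 2 ≤ |x|)
    (hy : 2 * |y| ≤ |x|) :
    |Kfun α (x - y) - Kfun α x| ≤ α * exp (-(|x / 2| ^ (α / 2) / 4)) * |y| := by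
  have hhalf : |x / 2| = |x| / 2 := by rw [abs_div, abs_two]
  have hxy : |x / 2| ≤ |x - y| := by rw [hhalf]; linarith [abs_sub_abs_le_abs_sub x y]
  rw [Kfun_eq_radialProfile, Kfun_eq_radialProfile]
  calc _ ≤ 2 * (α / 2) * exp (-(|x / 2| ^ (α / 2) / 4)) * |(|x - y| - |x|)| :=
        abs_radialProfile_sub_le (by linarith) (by linarith) (by rw [hhalf]; linarith) hxy
          (by rw [hhalf]; linarith)
    _ ≤ α * exp (-(|x / 2| ^ (α / 2) / 4)) * |y| := by
        rw [show 2 * (α / 2) = α by ring]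
        gcongr _ * ?_
        simpa using abs_abs_sub_abs_le_abs_sub (x - y) x

lemma integrableOn_abs_rpow_neg {α : ℝ} (hα : α < 1) :
    IntegrableOn (fun y : ℝ => |y| ^ (-α)) {y : ℝ | |y| < 1} := by
  have hball : {y : ℝ | |y| < 1} = Metric.ball 0 1 := by ext; simp
  rw [hball]
  refine integrableOn_ball_of_norm_le_rpow (C := 1) (by simp) (by simpa using hα)
    (ae_of_all _ fun y => by simp [abs_rpow_of_nonneg]) ?_
  exact (continuous_abs.measurable.pow_const _).aestronglyMeasurable

lemma integral_abs_Kfun_sub_div_le {α x : ℝ} (hα₀ : 0 ≤ α) (hα₁ : α < 1) (hx : 2 < |x|) :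
    ∫ y in {y : ℝ | |y| < 1}, |Kfun α (x - y) - Kfun α x| / |y| ^ (1 + α)
      ≤ α * exp (-(|x / 2| ^ (α / 2) / 4)) * ∫ y in {y : ℝ | |y| < 1}, |y| ^ (-α) := by
  rw [← integral_const_mul]
  refine integral_mono_of_nonneg (ae_of_all _ fun y => by positivity)
    ((integrableOn_abs_rpow_neg hα₁).const_mul _) ?_
  filter_upwards [ae_restrict_mem (measurableSet_lt continuous_abs.measurable measurable_const)]
    with y hy
  rcases eq_or_ne y 0 with rfl | hy₀
  · simp only [sub_zero, sub_self, abs_zero, zero_div]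
    positivity
  have hy_pos : 0 < |y| := abs_pos.mpr hy₀
  rw [div_le_iff₀ (rpow_pos_of_pos hy_pos _), mul_assoc, ← rpow_add hy_pos,
    show -α + (1 + α) = 1 by ring, rpow_one]
  exact abs_Kfun_sub_le hα₀ (by linarith) hx.le (by linarith [show |y| < 1 from hy])

lemma integrable_comp_abs_of_integrableOn_Ioi {E : Type*} [NormedAddCommGroup E] {g : ℝ → E}
    (hg : IntegrableOn g (Ioi 0)) :
    Integrable fun x => g |x| := by
  have hpos : IntegrableOn (fun x => g |x|) (Ioi 0) :=
    hg.congr_fun (fun x hx => by rw [abs_of_pos (mem_Ioi.mp hx)]) measurableSet_Ioi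
  have hneg : IntegrableOn (fun x => g |x|) (Iic 0) := by
    have hneg_emb : MeasurableEmbedding fun x : ℝ => -x := (Homeomorph.neg ℝ).measurableEmbedding
    rw [← Measure.map_neg_eq_self (volume : Measure ℝ), hneg_emb.integrableOn_map_iff]
    simp_rw [Function.comp_def, abs_neg, neg_preimage, neg_Iic, neg_zero]
    exact Iff.mpr integrableOn_Ici_iff_integrableOn_Ioi hpos
  rw [← integrableOn_univ, ← Iic_union_Ioi (a := (0 : ℝ))]
  exact hneg.union hpos

lemma integrable_exp_neg_mul_abs_rpow {b p : ℝ} (hb : 0 < b) (hp : 0 < p) :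
    Integrable fun x : ℝ => exp (-b * |x| ^ p) := by
  have h := integrableOn_rpow_mul_exp_neg_mul_rpow (s := 0) neg_one_lt_zero hp hb
  simp only [rpow_zero, one_mul] at h
  exact integrable_comp_abs_of_integrableOn_Ioi h

/-- For `α ∈ (1/2, 1)`,
`∫_{|x|>2} ( ∫_{|y|<1} |K(x−y) − K(x)| |y|^{−1−α} dy )² dx ≤ c` for a constant `c`
depending only on `α`. -/
theorem I2_bound (α : ℝ) (hα : α ∈ Ioo (1 / 2 : ℝ) 1) :
    ∃ c : ℝ, 0 < c ∧
      ∫⁻ x in {x : ℝ | 2 < |x|}, ENNReal.ofReal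
          ((∫ y in {y : ℝ | |y| < 1}, |Kfun α (x - y) - Kfun α x| / |y| ^ (1 + α)) ^ 2)
        ≤ ENNReal.ofReal c := by
  obtain ⟨hα₀, hα₁⟩ := hα
  set I := ∫ y in {y : ℝ | |y| < 1}, |y| ^ (-α)
  set G : ℝ → ℝ := fun x => (α * I) ^ 2 * exp (-(1 / 2) * |x / 2| ^ (α / 2))
  have hG : Integrable G := ((integrable_exp_neg_mul_abs_rpow (by norm_num) (by linarith)).comp_div
    two_ne_zero).const_mul _
  have hG₀ : 0 ≤ G := fun x => by positivity
  have hbound : ∀ x ∈ {x : ℝ | 2 < |x|},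
      (∫ y in {y : ℝ | |y| < 1}, |Kfun α (x - y) - Kfun α x| / |y| ^ (1 + α)) ^ 2 ≤ G x := by
    intro x hx
    calc _ ≤ (α * exp (-(|x / 2| ^ (α / 2) / 4)) * I) ^ 2 :=
          pow_le_pow_left₀ (integral_nonneg fun y => by positivity)
            (integral_abs_Kfun_sub_div_le (by linarith) hα₁ hx) 2
      _ = G x := by rw [mul_right_comm, mul_pow, sq (exp _), ← exp_add]; congr 2; ring
  refine ⟨(∫ x, G x) + 1, by linarith [integral_nonneg (μ := volume) hG₀], ?_⟩
  calc _ ≤ ∫⁻ x in {x : ℝ | 2 < |x|}, ENNReal.ofReal (G x) :=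
        setLIntegral_mono' (measurableSet_lt measurable_const continuous_abs.measurable)
          fun x hx => ENNReal.ofReal_le_ofReal (hbound x hx)
    _ ≤ ∫⁻ x, ENNReal.ofReal (G x) := setLIntegral_le_lintegral _ _
    _ = ENNReal.ofReal (∫ x, G x) :=
        (ofReal_integral_eq_lintegral_ofReal hG (ae_of_all _ hG₀)).symm
    _ ≤ ENNReal.ofReal ((∫ x, G x) + 1) := ENNReal.ofReal_le_ofReal (by linarith)
end

section
/- Let α ∈ (0,1), c > 0, and let m : ℝ → ℝ be a bounded differentiable function on ℝ∖{0} with ‖m‖_∞ ≤ c and |m′(x)| ≤ c/|x| for all x ≠ 0. Then for every x ≠ 0 the integral defining D_α[m](x) converges absolutely and there is a constant c′ (depending only on α and c) such that |D_α[m](x)| ≤ c′/|x|^α for all x ∈ ℝ∖{0}. (Hence every classical Mikhlin multiplier satisfies the hypotheses of the fractional Mikhlin theorem.) -/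
/-!
Split the integral at `y = |x|/2`. For `y ≤ |x|/2` the whole segment `[x - y, x]` stays at
distance at least `|x|/2` from the origin, so the mean value theorem gives
`|m x - m (x - y)| ≤ (2c/|x|) y` and the integrand is `O(y^(-α)/|x|)`; for `y > |x|/2` the bound
`|m| ≤ c` makes it `O(y^(-1-α))`. Both pieces are integrable and, by scaling, each contributes
a multiple of `|x|^(-α)`.
-/

open MeasureTheory Set

theorem norm_sub_le_of_norm_deriv_le_div_abs {E : Type*} [NormedAddCommGroup E]
    [NormedSpace ℝ E] {f : ℝ → E} {c x y : ℝ} (hc : 0 ≤ c) (hx : x ≠ 0)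
    (hdiff : ∀ ξ : ℝ, ξ ≠ 0 → DifferentiableAt ℝ f ξ)
    (hder : ∀ ξ : ℝ, ξ ≠ 0 → ‖deriv f ξ‖ ≤ c / |ξ|) (hy : |y| ≤ |x| / 2) :
    ‖f x - f (x - y)‖ ≤ 2 * c / |x| * |y| := by
  have hx' : 0 < |x| := abs_pos.mpr hx
  have hfar : ∀ ξ ∈ Metric.closedBall x (|x| / 2), |x| / 2 ≤ |ξ| := fun ξ hξ => by
    rw [Metric.mem_closedBall, Real.dist_eq] at hξ
    linarith [abs_sub_abs_le_abs_sub x ξ, abs_sub_comm x ξ]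
  have hne : ∀ ξ ∈ Metric.closedBall x (|x| / 2), ξ ≠ 0 := fun ξ hξ =>
    abs_pos.mp ((half_pos hx').trans_le (hfar ξ hξ))
  have hbound : ∀ ξ ∈ Metric.closedBall x (|x| / 2), ‖deriv f ξ‖ ≤ 2 * c / |x| := fun ξ hξ =>
    calc ‖deriv f ξ‖ ≤ c / |ξ| := hder ξ (hne ξ hξ)
      _ ≤ c / (|x| / 2) := div_le_div_of_nonneg_left hc (half_pos hx') (hfar ξ hξ)
      _ = 2 * c / |x| := by field_simp
  have hmem : x - y ∈ Metric.closedBall x (|x| / 2) := by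
    rwa [Metric.mem_closedBall, Real.dist_eq, sub_sub_cancel_left, abs_neg]
  simpa [abs_sub_comm] using
    (convex_closedBall x (|x| / 2)).norm_image_sub_le_of_norm_deriv_le
      (fun ξ hξ => hdiff ξ (hne ξ hξ)) hbound hmem (Metric.mem_closedBall_self (by positivity))

theorem integrableOn_Ioc_div_rpow_of_abs_le {g : ℝ → ℝ} {α A r : ℝ} (hα : α < 1) (hr : 0 < r)
    (hg : Measurable g) (hsmall : ∀ y ∈ Ioc 0 r, |g y| ≤ A * y / r) :
    IntegrableOn (fun y => g y / y ^ (1 + α)) (Ioc 0 r) ∧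
      ∫ y in Ioc 0 r, |g y / y ^ (1 + α)| ≤ A * r ^ (-α) / (1 - α) := by
  have hmaj : IntegrableOn (fun y : ℝ => A / r * y ^ (-α)) (Ioc 0 r) :=
    ((intervalIntegrable_iff_integrableOn_Ioc_of_le hr.le).1
      (intervalIntegral.intervalIntegrable_rpow' (by linarith))).const_mul _
  have hle : ∀ y ∈ Ioc 0 r, |g y / y ^ (1 + α)| ≤ A / r * y ^ (-α) := fun y ⟨hy, hyr⟩ => by
    have hpow : 0 < y ^ (1 + α) := Real.rpow_pos_of_pos hy _
    rw [abs_div, abs_of_pos hpow, div_le_iff₀ hpow, mul_assoc, ← Real.rpow_add hy]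
    simpa [mul_div_right_comm] using hsmall y ⟨hy, hyr⟩
  have hint : IntegrableOn (fun y => g y / y ^ (1 + α)) (Ioc 0 r) :=
    hmaj.mono' (hg.div (measurable_id.pow_const _)).aestronglyMeasurable
      ((ae_restrict_iff' measurableSet_Ioc).2 (.of_forall hle))
  refine ⟨hint, (setIntegral_mono_on hint.abs hmaj measurableSet_Ioc hle).trans_eq ?_⟩
  rw [integral_const_mul, ← intervalIntegral.integral_of_le hr.le,
    integral_rpow (.inl (by linarith)), Real.zero_rpow (by linarith), sub_zero, neg_add_eq_sub,
    Real.rpow_sub hr, Real.rpow_one, Real.rpow_neg hr.le]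
  field_simp

theorem integrableOn_Ioi_div_rpow_of_abs_le {g : ℝ → ℝ} {α B r : ℝ} (hα : 0 < α) (hr : 0 < r)
    (hg : Measurable g) (hlarge : ∀ y ∈ Ioi r, |g y| ≤ B) :
    IntegrableOn (fun y => g y / y ^ (1 + α)) (Ioi r) ∧
      ∫ y in Ioi r, |g y / y ^ (1 + α)| ≤ B * r ^ (-α) / α := by
  have hmaj : IntegrableOn (fun y : ℝ => B * y ^ (-(1 + α))) (Ioi r) :=
    (integrableOn_Ioi_rpow_of_lt (by linarith) hr).const_mul _
  have hle : ∀ y ∈ Ioi r, |g y / y ^ (1 + α)| ≤ B * y ^ (-(1 + α)) := fun y hy => by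
    have hy0 : 0 < y := hr.trans hy
    rw [abs_div, abs_of_pos (Real.rpow_pos_of_pos hy0 _), Real.rpow_neg hy0.le, ← div_eq_mul_inv]
    exact div_le_div_of_nonneg_right (hlarge y hy) (Real.rpow_nonneg hy0.le _)
  have hint : IntegrableOn (fun y => g y / y ^ (1 + α)) (Ioi r) :=
    hmaj.mono' (hg.div (measurable_id.pow_const _)).aestronglyMeasurable
      ((ae_restrict_iff' measurableSet_Ioi).2 (.of_forall hle))
  refine ⟨hint, (setIntegral_mono_on hint.abs hmaj measurableSet_Ioi hle).trans_eq ?_⟩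
  rw [integral_const_mul, integral_Ioi_rpow_of_lt (by linarith) hr, show -(1 + α) + 1 = -α by ring]
  field_simp

theorem integrableOn_Ioi_zero_div_rpow_of_abs_le {g : ℝ → ℝ} {α A B r : ℝ}
    (hα : α ∈ Ioo (0 : ℝ) 1) (hr : 0 < r) (hg : Measurable g)
    (hsmall : ∀ y ∈ Ioc 0 r, |g y| ≤ A * y / r) (hlarge : ∀ y ∈ Ioi r, |g y| ≤ B) :
    IntegrableOn (fun y => g y / y ^ (1 + α)) (Ioi 0) ∧
      ∫ y in Ioi 0, |g y / y ^ (1 + α)| ≤ r ^ (-α) * (A / (1 - α) + B / α) := by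
  obtain ⟨hint₁, hle₁⟩ := integrableOn_Ioc_div_rpow_of_abs_le hα.2 hr hg hsmall
  obtain ⟨hint₂, hle₂⟩ := integrableOn_Ioi_div_rpow_of_abs_le hα.1 hr hg hlarge
  rw [← Ioc_union_Ioi_eq_Ioi hr.le]
  refine ⟨hint₁.union hint₂, ?_⟩
  rw [setIntegral_union (Ioc_disjoint_Ioi le_rfl) measurableSet_Ioi hint₁.abs hint₂.abs]
  linarith [show r ^ (-α) * (A / (1 - α) + B / α) = A * r ^ (-α) / (1 - α) + B * r ^ (-α) / α by
    ring]

/-- Every classical Mikhlin multiplier satisfies the hypotheses of the fractional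
Mikhlin theorem: if `m` is bounded by `c`, differentiable away from `0` with
`|m′(x)| ≤ c/|x|`, then for every `x ≠ 0` the integral defining `D_α[m](x)`
converges absolutely and `|D_α[m](x)| ≤ c′/|x|^α` for a constant `c′` depending
only on `α` and `c`. -/
theorem classical_mikhlin_implies_fractional (α c : ℝ)
    (hα : α ∈ Ioo (0 : ℝ) 1) (hc : 0 < c)
    (m : ℝ → ℝ) (hmb : ∀ x, |m x| ≤ c)
    (hdiff : ∀ x : ℝ, x ≠ 0 → DifferentiableAt ℝ m x)
    (hder : ∀ x : ℝ, x ≠ 0 → |deriv m x| ≤ c / |x|) :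
    ∃ c' : ℝ, 0 < c' ∧ ∀ x : ℝ, x ≠ 0 →
      IntegrableOn (fun y => (m x - m (x - y)) / y ^ (1 + α)) (Ioi (0 : ℝ)) ∧
      |Dpos α m x| ≤ c' / |x| ^ α := by
  have hα₀ : 0 < α := hα.1
  have h1α : 0 < 1 - α := sub_pos.2 hα.2
  have hm : Measurable m := measurable_of_continuousOn_compl_singleton 0 fun ξ hξ =>
    (hdiff ξ hξ).continuousAt.continuousWithinAt
  refine ⟨α / Real.Gamma (1 - α) * (2 ^ α * (c / (1 - α) + 2 * c / α)),
    by positivity, fun x hx => ?_⟩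
  have hx' : 0 < |x| := abs_pos.mpr hx
  have hsmall : ∀ y ∈ Ioc 0 (|x| / 2), |m x - m (x - y)| ≤ c * y / (|x| / 2) := fun y hy => by
    have := norm_sub_le_of_norm_deriv_le_div_abs hc.le hx hdiff hder
      ((abs_of_pos hy.1).trans_le hy.2)
    rw [Real.norm_eq_abs, abs_of_pos hy.1] at this
    exact this.trans_eq (by field_simp)
  have hlarge : ∀ y ∈ Ioi (|x| / 2), |m x - m (x - y)| ≤ 2 * c := fun y _ =>
    (abs_sub _ _).trans (by linarith [hmb x, hmb (x - y)])
  obtain ⟨hint, hbound⟩ :=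
    integrableOn_Ioi_zero_div_rpow_of_abs_le hα (half_pos hx') (by fun_prop) hsmall hlarge
  refine ⟨hint, ?_⟩
  calc |Dpos α m x|
      = α / Real.Gamma (1 - α) * |∫ y in Ioi 0, (m x - m (x - y)) / y ^ (1 + α)| := by
        rw [Dpos, abs_mul, abs_of_pos (by positivity)]
    _ ≤ α / Real.Gamma (1 - α) * ((|x| / 2) ^ (-α) * (c / (1 - α) + 2 * c / α)) := by
        gcongr
        exact abs_integral_le_integral_abs.trans hbound
    _ = α / Real.Gamma (1 - α) * (2 ^ α * (c / (1 - α) + 2 * c / α)) / |x| ^ α := by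
        rw [Real.rpow_neg (by positivity), Real.div_rpow hx'.le zero_le_two]
        field_simp
end
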